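/- Hierarchical Owen efficiency: for any binary hierarchical coalition structure whose root coalition is N, the sum of Owen values over all players equals ν(N) − ν(∅): Σ_{i ∈ N} Ω_i(∅, 𝒯) = ν(N) − ν(∅). -/

import Mathlib

/-- A binary hierarchical coalition structure: a binary tree whose leaves
are coalitions (finsets of players). -/
inductive BHCS (ι : Type*) where
  | leaf : Finset ι → BHCS ι
  | node : BHCS ι → BHCS ι → BHCS ι

namespace BHCS

variable {ι : Type*} [DecidableEq ι]

/-- The set of players of a (sub)hierarchy. -/
def players : BHCS ι → Finset ι
  | leaf T => T
  | node l r => players l ∪ players r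

/-- Well-formedness: leaves are nonempty and sibling subtrees are disjoint. -/
def WF : BHCS ι → Prop
  | leaf T => T.Nonempty
  | node l r => WF l ∧ WF r ∧ Disjoint (players l) (players r)

/-- The recursive Owen coalition value `Ω_i(Q, T)`. -/
noncomputable def owen (ν : Finset ι → ℝ) : Finset ι → BHCS ι → ι → ℝ
  | Q, leaf T, _ => (1 / (T.card : ℝ)) * (ν (Q ∪ T) - ν Q)
  | Q, node l r, i =>
      if i ∈ players l then
        (1 / 2) * owen ν (Q ∪ players r) l i + (1 / 2) * owen ν Q l i
      else
        (1 / 2) * owen ν (Q ∪ players l) r i + (1 / 2) * owen ν Q r i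

end BHCS

/-! By induction on the tree, the players of `t` share `ν (Q ∪ players t) - ν Q`. At a node
`node l r`, the players of `l` get the average of their shares when `l` joins after `r` and when it
joins before `r`, and symmetrically for `r`; the four marginal contributions telescope to
`ν (Q ∪ players l ∪ players r) - ν Q`. -/

namespace BHCS

variable {ι : Type*} [DecidableEq ι]

theorem owen_node_of_mem_left (ν : Finset ι → ℝ) (Q : Finset ι) {l r : BHCS ι} {i : ι}
    (hi : i ∈ l.players) :
    owen ν Q (node l r) i = (1 / 2) * owen ν (Q ∪ r.players) l i + (1 / 2) * owen ν Q l i := by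
  simp [owen, hi]

theorem owen_node_of_mem_right (ν : Finset ι → ℝ) (Q : Finset ι) {l r : BHCS ι} {i : ι}
    (hd : Disjoint l.players r.players) (hi : i ∈ r.players) :
    owen ν Q (node l r) i = (1 / 2) * owen ν (Q ∪ l.players) r i + (1 / 2) * owen ν Q r i := by
  simp [owen, Finset.disjoint_right.mp hd hi]

theorem sum_owen {ν : Finset ι → ℝ} {t : BHCS ι} (hwf : t.WF) (Q : Finset ι) :
    ∑ i ∈ t.players, owen ν Q t i = ν (Q ∪ t.players) - ν Q := by
  induction t generalizing Q with
  | leaf T =>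
    have hT : (T.card : ℝ) ≠ 0 := by exact_mod_cast hwf.card_pos.ne'
    simp only [players, owen, Finset.sum_const, nsmul_eq_mul]
    field_simp
  | node l r ihl ihr =>
    obtain ⟨hl, hr, hd⟩ := hwf
    have hsum_l : ∑ i ∈ l.players, owen ν Q (node l r) i
        = (1 / 2) * (ν (Q ∪ r.players ∪ l.players) - ν (Q ∪ r.players))
          + (1 / 2) * (ν (Q ∪ l.players) - ν Q) := by
      rw [Finset.sum_congr rfl fun i hi => owen_node_of_mem_left ν Q hi,
        Finset.sum_add_distrib, ← Finset.mul_sum, ← Finset.mul_sum, ihl hl, ihl hl]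
    have hsum_r : ∑ i ∈ r.players, owen ν Q (node l r) i
        = (1 / 2) * (ν (Q ∪ l.players ∪ r.players) - ν (Q ∪ l.players))
          + (1 / 2) * (ν (Q ∪ r.players) - ν Q) := by
      rw [Finset.sum_congr rfl fun i hi => owen_node_of_mem_right ν Q hd hi,
        Finset.sum_add_distrib, ← Finset.mul_sum, ← Finset.mul_sum, ihr hr, ihr hr]
    rw [players, Finset.sum_union hd, hsum_l, hsum_r, Finset.union_right_comm Q r.players,
      ← Finset.union_assoc]
    ring

end BHCS

theorem stmt_13 {ι : Type*} [DecidableEq ι] (N : Finset ι)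
    (t : BHCS ι) (hwf : BHCS.WF t) (hroot : BHCS.players t = N)
    (ν : Finset ι → ℝ) :
    ∑ i ∈ N, BHCS.owen ν ∅ t i = ν N - ν ∅ := by
  subst hroot
  simpa using BHCS.sum_owen hwf ∅
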